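/- arXiv:2509.15013 — 3 statements merged into one kernel-verified Lean document; each statement's English description precedes it below -/
import Mathlib

section
/- Let H be the parity-check matrix of an (m, n, a=1, b=1, h) grid code over a finite field F_q, and suppose H is MR. Let h' ≤ h and let C_1, …, C_{h'} ⊆ [m]×[n] be simple cycles with the following two properties: (1) there exists an acyclic subgraph T ⊆ C_1 ∪ ⋯ ∪ C_{h'} such that |(C_1 ∪ ⋯ ∪ C_{h'}) \ T| ≤ h; and (2) for every ℓ ∈ [h'] there exists an edge (i_ℓ,j_ℓ) ∈ C_ℓ that does not appear in C_{ℓ'} for any ℓ' ∈ [h'] with ℓ' ≠ ℓ. Then the cycle sums Σ_H(C_1), …, Σ_H(C_{h'}) ∈ F_q^h are linearly independent over F_q. -/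
/-!
Each cycle `C` carries a vector `x` supported exactly on `C`, with `+1` on the edges
`(i_ℓ, j_ℓ)` and `-1` on the edges `(i_{ℓ+1}, j_ℓ)`. Every vertex of the cycle meets one edge of
each sign, so `x` lies in the kernel of all row and column checks, and `H x` is the cycle sum
`Σ_H(C)` placed in the global rows. A vanishing combination `∑ g_ℓ Σ_H(C_ℓ) = 0` thus gives a
kernel vector `∑ g_ℓ x_ℓ` of `H` supported on `C_1 ∪ ⋯ ∪ C_{h'}`, which by (1) is a recoverable
pattern; MR forces the vector to vanish, and reading it at the private edge of `C_ℓ`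
from (2) gives `g_ℓ = 0`.
-/

open Finset

/-- A subset of `[m] × [n]`, viewed as the edge set of a bipartite graph with left
vertex set `Fin m` and right vertex set `Fin n`, is a *simple cycle* (of length `2k`,
`k ≥ 2`) if it has the form
`{(i₁,j₁),(i₂,j₁),(i₂,j₂),(i₃,j₂),…,(i_k,j_k),(i₁,j_k)}`
for pairwise distinct `i₁,…,i_k` and pairwise distinct `j₁,…,j_k`. -/
def IsSimpleCycle {m n : ℕ} (C : Finset (Fin m × Fin n)) : Prop :=
  ∃ k : ℕ, 2 ≤ k ∧ ∃ (I : ℕ → Fin m) (J : ℕ → Fin n),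
    Set.InjOn I (Set.Iio k) ∧ Set.InjOn J (Set.Iio k) ∧
    C = ((Finset.range k).image fun ℓ => (I ℓ, J ℓ)) ∪
        ((Finset.range k).image fun ℓ => (I ((ℓ + 1) % k), J ℓ))

/-- An edge set is *acyclic* if it contains no simple cycle. -/
def IsAcyclicEdges {m n : ℕ} (E : Finset (Fin m × Fin n)) : Prop :=
  ∀ C ⊆ E, ¬ IsSimpleCycle C

/-- The parity-check matrix of an `(m, n, a = 1, b = 1, h)` grid code over `F` with
global parity-check vectors `c`.  Rows are indexed by `Fin m ⊕ (Fin (n-1) ⊕ Fin h)`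
(the `m` row checks, the first `n - 1` column checks, and the `h` global checks) and
columns by `Fin m × Fin n`. -/
def gridH (F : Type*) [Field F] (m n h : ℕ) (c : Fin m × Fin n → Fin h → F) :
    Matrix (Fin m ⊕ (Fin (n - 1) ⊕ Fin h)) (Fin m × Fin n) F :=
  Matrix.of fun r ij =>
    Sum.elim (fun i => if ij.1 = i then (1 : F) else 0)
      (Sum.elim (fun j : Fin (n - 1) => if (ij.2 : ℕ) = (j : ℕ) then (1 : F) else 0)
        (fun k => c ij k)) r

/-- The grid code with global parity checks `c` is *maximally recoverable* (MR) if the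
columns of its parity-check matrix indexed by `E` are linearly independent for every
pattern `E` which is the union of an acyclic edge set and at most `h` further edges. -/
def IsMR (F : Type*) [Field F] (m n h : ℕ) (c : Fin m × Fin n → Fin h → F) : Prop :=
  ∀ E : Finset (Fin m × Fin n),
    (∃ E' F' : Finset (Fin m × Fin n),
        IsAcyclicEdges E' ∧ F'.card ≤ h ∧ E = E' ∪ F') →
    ((gridH F m n h c).submatrix id (fun e : E => (e : Fin m × Fin n))).rank = E.card

/-- A *spanning tree* of the complete bipartite graph on `[m] ⊔ [n]`: an acyclic edge
set with `m + n - 1` edges. -/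
def IsSpanningTree {m n : ℕ} (T : Finset (Fin m × Fin n)) : Prop :=
  IsAcyclicEdges T ∧ T.card = m + n - 1

/-- `IsCycleSumOf c C s` says `C` is a simple cycle
`{(i₁,j₁),(i₂,j₁),…,(i_k,j_k),(i₁,j_k)}` and
`s = Σ_{ℓ=1}^{k} (c^{i_ℓ,j_ℓ} − c^{i_{ℓ+1},j_ℓ})` (with `i_{k+1} := i₁`) is the
corresponding cycle sum `Σ_H(C) ∈ F^h`. -/
def IsCycleSumOf {F : Type*} [Field F] {m n h : ℕ} (c : Fin m × Fin n → Fin h → F)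
    (C : Finset (Fin m × Fin n)) (s : Fin h → F) : Prop :=
  ∃ k : ℕ, 2 ≤ k ∧ ∃ (I : ℕ → Fin m) (J : ℕ → Fin n),
    Set.InjOn I (Set.Iio k) ∧ Set.InjOn J (Set.Iio k) ∧
    C = ((Finset.range k).image fun ℓ => (I ℓ, J ℓ)) ∪
        ((Finset.range k).image fun ℓ => (I ((ℓ + 1) % k), J ℓ)) ∧
    s = ∑ ℓ ∈ Finset.range k, (c (I ℓ, J ℓ) - c (I ((ℓ + 1) % k), J ℓ))

/-- `IsGammaCycleSumOf γ C g` says `C` is a simple cycle and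
`g = γ(C) = Σ_{ℓ=1}^{k} (γ(i_ℓ,j_ℓ) − γ(i_{ℓ+1},j_ℓ))`. -/
def IsGammaCycleSumOf {F : Type*} [Field F] {m n : ℕ} (γ : Fin m × Fin n → F)
    (C : Finset (Fin m × Fin n)) (g : F) : Prop :=
  ∃ k : ℕ, 2 ≤ k ∧ ∃ (I : ℕ → Fin m) (J : ℕ → Fin n),
    Set.InjOn I (Set.Iio k) ∧ Set.InjOn J (Set.Iio k) ∧
    C = ((Finset.range k).image fun ℓ => (I ℓ, J ℓ)) ∪
        ((Finset.range k).image fun ℓ => (I ((ℓ + 1) % k), J ℓ)) ∧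
    g = ∑ ℓ ∈ Finset.range k, (γ (I ℓ, J ℓ) - γ (I ((ℓ + 1) % k), J ℓ))


theorem Finset.sum_range_succ_mod {M : Type*} [AddCommMonoid M] (k : ℕ) (f : ℕ → M) :
    ∑ ℓ ∈ range k, f ((ℓ + 1) % k) = ∑ ℓ ∈ range k, f ℓ := by
  rcases k with _ | k
  · simp
  · rw [sum_range_succ, sum_range_succ', Nat.mod_self]
    congr 1
    exact sum_congr rfl fun ℓ hℓ => by rw [Nat.mod_eq_of_lt (by simpa using hℓ)]

theorem Nat.succ_mod_ne_self {k ℓ : ℕ} (hk : 2 ≤ k) (hℓ : ℓ < k) : (ℓ + 1) % k ≠ ℓ := by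
  rcases (show ℓ + 1 ≤ k from hℓ).lt_or_eq with h | h
  · rw [Nat.mod_eq_of_lt h]; omega
  · rw [h, Nat.mod_self]; omega

theorem linearIndependent_of_exists_ne_zero_of_forall_ne {ι κ R : Type*} [Fintype ι] [Ring R]
    [NoZeroDivisors R] {x : ι → κ → R} (h : ∀ ℓ, ∃ e, x ℓ e ≠ 0 ∧ ∀ ℓ' ≠ ℓ, x ℓ' e = 0) :
    LinearIndependent R x := by
  rw [Fintype.linearIndependent_iff]
  intro g hg ℓ
  obtain ⟨e, hne, hzero⟩ := h ℓ
  have hge := congrFun hg e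
  rw [Finset.sum_apply, Fintype.sum_eq_single ℓ fun ℓ' h' => by simp [hzero ℓ' h']] at hge
  simpa [hne] using hge

namespace Matrix

variable {ι m n F : Type*} [Fintype n]

theorem mulVec_eq_submatrix_mulVec_of_support_subset {R : Type*} [NonUnitalNonAssocSemiring R]
    (A : Matrix m n R) (E : Finset n) {y : n → R} (hy : ∀ e ∉ E, y e = 0) :
    A *ᵥ y = A.submatrix id (fun e : E => (e : n)) *ᵥ fun e => y e := by
  ext r
  simp only [mulVec, dotProduct, submatrix_apply, id]
  rw [Finset.sum_coe_sort E fun e => A r e * y e]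
  exact (Finset.sum_subset (subset_univ E) fun e _ he => by simp [hy e he]).symm

variable [Field F]

theorem linearIndependent_col_of_rank_eq_card {A : Matrix m n F}
    (hA : A.rank = Fintype.card n) : LinearIndependent F A.col :=
  linearIndependent_iff_card_eq_finrank_span.mpr (by rw [← hA, rank_eq_finrank_span_cols]; rfl)

theorem linearIndependent_mulVec_of_rank_submatrix [Fintype ι] (A : Matrix m n F) (E : Finset n)
    (hA : (A.submatrix id (fun e : E => (e : n))).rank = E.card) {x : ι → n → F}
    (hxE : ∀ ℓ e, x ℓ e ≠ 0 → e ∈ E) (hx : ∀ ℓ, ∃ e, x ℓ e ≠ 0 ∧ ∀ ℓ' ≠ ℓ, x ℓ' e = 0) :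
    LinearIndependent F fun ℓ => A *ᵥ x ℓ := by
  have hinj : Function.Injective (A.submatrix id (fun e : E => (e : n))).mulVecLin :=
    mulVec_injective_iff.mpr (linearIndependent_col_of_rank_eq_card (by simpa using hA))
  have hrestrict : LinearIndependent F fun ℓ (e : E) => x ℓ e :=
    linearIndependent_of_exists_ne_zero_of_forall_ne fun ℓ => by
      obtain ⟨e, hne, hzero⟩ := hx ℓ
      exact ⟨⟨e, hxE ℓ e hne⟩, hne, fun ℓ' h' => hzero ℓ' h'⟩
  have hfactor : (fun ℓ => A *ᵥ x ℓ) =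
      (A.submatrix id (fun e : E => (e : n))).mulVecLin ∘ fun ℓ (e : E) => x ℓ e :=
    funext fun ℓ => A.mulVec_eq_submatrix_mulVec_of_support_subset E fun e he =>
      not_ne_iff.mp (mt (hxE ℓ e) he)
  rw [hfactor]
  exact hrestrict.map' _ (LinearMap.ker_eq_bot.mpr hinj)

end Matrix

theorem LinearIndependent.of_sumElim_zero {ι α β R : Type*} [Semiring R] {v : ι → β → R}
    (h : LinearIndependent R fun i => Sum.elim (0 : α → R) (v i)) : LinearIndependent R v :=
  h.of_comp ((LinearEquiv.sumArrowLequivProdArrow α β R R).symm.toLinearMap ∘ₗ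
    LinearMap.inr R (α → R) (β → R))

section GridCode

open Matrix

variable {F : Type*} [Field F] {m n : ℕ}

def cycleEdges (k : ℕ) (I : ℕ → Fin m) (J : ℕ → Fin n) : Finset (Fin m × Fin n) :=
  ((range k).image fun ℓ => (I ℓ, J ℓ)) ∪ ((range k).image fun ℓ => (I ((ℓ + 1) % k), J ℓ))

def cycleVec (k : ℕ) (I : ℕ → Fin m) (J : ℕ → Fin n) : Fin m × Fin n → F :=
  ∑ ℓ ∈ range k, (Pi.single (I ℓ, J ℓ) 1 - Pi.single (I ((ℓ + 1) % k), J ℓ) 1)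

theorem gridH_mulVec_cycleVec {h : ℕ} (c : Fin m × Fin n → Fin h → F) (k : ℕ)
    (I : ℕ → Fin m) (J : ℕ → Fin n) :
    gridH F m n h c *ᵥ cycleVec k I J =
      Sum.elim (0 : Fin m → F) (Sum.elim (0 : Fin (n - 1) → F)
        (∑ ℓ ∈ range k, (c (I ℓ, J ℓ) - c (I ((ℓ + 1) % k), J ℓ)))) := by
  ext (i | j | t)
  · simp only [cycleVec, mulVec_sum, mulVec_sub, mulVec_single_one, Finset.sum_apply,
      Pi.sub_apply, col_apply, gridH, of_apply, Sum.elim_inl, sum_sub_distrib]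
    rw [sum_range_succ_mod k fun ℓ => if I ℓ = i then (1 : F) else 0]
    simp
  · simp [cycleVec, mulVec_sum, mulVec_sub, gridH]
  · simp [cycleVec, mulVec_sum, mulVec_sub, gridH]

theorem cycleVec_eq_zero_of_notMem {k : ℕ} {I : ℕ → Fin m} {J : ℕ → Fin n} {e : Fin m × Fin n}
    (he : e ∉ cycleEdges k I J) : cycleVec (F := F) k I J e = 0 := by
  simp only [cycleEdges, mem_union, mem_image, mem_range, not_or, not_exists, not_and] at he
  rw [cycleVec, Finset.sum_apply]
  refine sum_eq_zero fun ℓ hℓ => ?_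
  simp [Ne.symm (he.1 ℓ (mem_range.mp hℓ)), Ne.symm (he.2 ℓ (mem_range.mp hℓ))]

theorem cycleVec_apply_of_lt {k : ℕ} {I : ℕ → Fin m} {J : ℕ → Fin n}
    (hJ : Set.InjOn J (Set.Iio k)) {ℓ : ℕ} (hℓ : ℓ < k) (i : Fin m) :
    cycleVec (F := F) k I J (i, J ℓ) =
      (Pi.single (I ℓ) 1 : Fin m → F) i - (Pi.single (I ((ℓ + 1) % k)) 1 : Fin m → F) i := by
  rw [cycleVec, Finset.sum_apply, sum_eq_single_of_mem ℓ (mem_range.mpr hℓ)]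
  · simp [Pi.single_apply]
  · intro ℓ' hℓ' hne
    have hJne : J ℓ ≠ J ℓ' := fun hJℓ => hne (hJ (mem_range.mp hℓ') hℓ hJℓ.symm)
    simp [hJne]

theorem cycleVec_ne_zero_of_mem {k : ℕ} {I : ℕ → Fin m} {J : ℕ → Fin n} (hk : 2 ≤ k)
    (hI : Set.InjOn I (Set.Iio k)) (hJ : Set.InjOn J (Set.Iio k)) {e : Fin m × Fin n}
    (he : e ∈ cycleEdges k I J) : cycleVec (F := F) k I J e ≠ 0 := by
  have hI_succ : ∀ ℓ < k, I ((ℓ + 1) % k) ≠ I ℓ := fun ℓ hℓ hIℓ =>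
    Nat.succ_mod_ne_self hk hℓ (hI (Nat.mod_lt _ (by omega)) hℓ hIℓ)
  simp only [cycleEdges, mem_union, mem_image, mem_range] at he
  rcases he with ⟨ℓ, hℓ, rfl⟩ | ⟨ℓ, hℓ, rfl⟩ <;> simp [cycleVec_apply_of_lt hJ hℓ, hI_succ ℓ hℓ]

theorem IsCycleSumOf.exists_mulVec_eq {h : ℕ} {c : Fin m × Fin n → Fin h → F}
    {C : Finset (Fin m × Fin n)} {s : Fin h → F} (hs : IsCycleSumOf c C s) :
    ∃ x : Fin m × Fin n → F, (∀ e, x e ≠ 0 ↔ e ∈ C) ∧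
      gridH F m n h c *ᵥ x = Sum.elim (0 : Fin m → F) (Sum.elim (0 : Fin (n - 1) → F) s) := by
  obtain ⟨k, hk, I, J, hI, hJ, rfl, rfl⟩ := hs
  exact ⟨cycleVec k I J, fun e => ⟨not_imp_comm.mp cycleVec_eq_zero_of_notMem,
    cycleVec_ne_zero_of_mem hk hI hJ⟩, gridH_mulVec_cycleVec c k I J⟩

end GridCode

open Matrix in
theorem statement1_general (m n h h' : ℕ)
    (F : Type*) [Field F] (c : Fin m × Fin n → Fin h → F)
    (hMR : IsMR F m n h c)
    (C : Fin h' → Finset (Fin m × Fin n))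
    (h1 : ∃ T : Finset (Fin m × Fin n), T ⊆ Finset.univ.biUnion C ∧
      IsAcyclicEdges T ∧ ((Finset.univ.biUnion C) \ T).card ≤ h)
    (h2 : ∀ ℓ, ∃ e ∈ C ℓ, ∀ ℓ', ℓ' ≠ ℓ → e ∉ C ℓ')
    (s : Fin h' → Fin h → F) (hs : ∀ ℓ, IsCycleSumOf c (C ℓ) (s ℓ)) :
    LinearIndependent F s := by
  choose x hxC hxs using fun ℓ => (hs ℓ).exists_mulVec_eq
  obtain ⟨T, hTsub, hTacyc, hTcard⟩ := h1
  have hrank := hMR _ ⟨T, _, hTacyc, hTcard, (union_sdiff_of_subset hTsub).symm⟩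
  have hindep : LinearIndependent F fun ℓ => gridH F m n h c *ᵥ x ℓ := by
    refine (gridH F m n h c).linearIndependent_mulVec_of_rank_submatrix _ hrank
      (fun ℓ e he => mem_biUnion.mpr ⟨ℓ, mem_univ ℓ, (hxC ℓ e).mp he⟩) fun ℓ => ?_
    obtain ⟨e, he, hother⟩ := h2 ℓ
    exact ⟨e, (hxC ℓ e).mpr he, fun ℓ' hℓ' => not_ne_iff.mp (mt (hxC ℓ' e).mp (hother ℓ' hℓ'))⟩
  simp only [hxs] at hindep
  exact hindep.of_sumElim_zero.of_sumElim_zero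

/-- Proposition 2.5.  If `H = gridH F m n h c` is MR, `h' ≤ h`, and
`C 0, …, C (h'-1)` are simple cycles such that (1) there is an acyclic subgraph
`T ⊆ C 0 ∪ ⋯ ∪ C (h'-1)` with `|(C 0 ∪ ⋯ ∪ C (h'-1)) \ T| ≤ h`, and (2) each `C ℓ`
has an edge appearing in no other `C ℓ'`, then the cycle sums `Σ_H(C ℓ)` are linearly
independent over `F`. -/
theorem statement1 (m n h h' : ℕ) (hm : 2 ≤ m) (hn : 2 ≤ n) (hh : 1 ≤ h)
    (hh'pos : 1 ≤ h') (hh' : h' ≤ h)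
    (F : Type*) [Field F] [Fintype F] (c : Fin m × Fin n → Fin h → F)
    (hMR : IsMR F m n h c)
    (C : Fin h' → Finset (Fin m × Fin n))
    (hcyc : ∀ ℓ, IsSimpleCycle (C ℓ))
    (h1 : ∃ T : Finset (Fin m × Fin n), T ⊆ Finset.univ.biUnion C ∧
      IsAcyclicEdges T ∧ ((Finset.univ.biUnion C) \ T).card ≤ h)
    (h2 : ∀ ℓ, ∃ e ∈ C ℓ, ∀ ℓ', ℓ' ≠ ℓ → e ∉ C ℓ')
    (s : Fin h' → Fin h → F) (hs : ∀ ℓ, IsCycleSumOf c (C ℓ) (s ℓ)) :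
    LinearIndependent F s :=
  statement1_general m n h h' F c hMR C h1 h2 s hs
end

section
/- Let m ≥ 2, n ≥ 2, h ≥ 1 and let q = p^d with p prime and d ≥ h. If some Gabidulin construction H is an MR (m, n, a=1, b=1, h) grid code over F_q, then q ≥ binom(n, ⌈h/2⌉). -/
open Finset

/-!
Fix two rows `i₀ ≠ i₁` and put `δ j = γ(i₀,j) - γ(i₁,j)`. The sums of `δ` over the
`⌈h/2⌉`-subsets of `[n]` are pairwise distinct, which gives `binom(n, ⌈h/2⌉) ≤ q`. Indeed, if
two such subsets had equal sums, removing their intersection leaves disjoint sets `A`, `B` of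
equal size with `Σ_A δ = Σ_B δ`. The vector that is `±1` on `{i₀} × (A ∪ B)` and `∓1` on
`{i₁} × (A ∪ B)` (sign `+` on `A`) has zero row and column sums, and since Frobenius is
additive and fixes `±1`, its Gabidulin syndrome is `(Σ_A δ - Σ_B δ)^{p^l} = 0`. But its
support is a star (acyclic) plus `|A ∪ B| - 1 ≤ h` edges, contradicting maximal recoverability.
-/

open Finset Matrix

theorem Matrix.rank_lt_card_of_mulVec_eq_zero {K α β : Type*} [Field K] [Fintype β]
    (M : Matrix α β K) {y : β → K} (hy : y ≠ 0) (hMy : M *ᵥ y = 0) :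
    M.rank < Fintype.card β := by
  have hker : 0 < Module.finrank K (LinearMap.ker M.mulVecLin) :=
    Module.finrank_pos_iff_exists_ne_zero.2 ⟨⟨y, hMy⟩, fun h0 => hy (congrArg Subtype.val h0)⟩
  have hsum := LinearMap.finrank_range_add_finrank_ker M.mulVecLin
  rw [Module.finrank_pi] at hsum
  rw [Matrix.rank]
  omega

theorem Matrix.submatrix_mulVec_of_support_subset {R α β : Type*} [NonUnitalNonAssocSemiring R]
    [Fintype β] (M : Matrix α β R) (E : Finset β) {x : β → R} (hx : ∀ b ∉ E, x b = 0) :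
    M.submatrix id (fun e : E => (e : β)) *ᵥ (fun e : E => x e) = M *ᵥ x := by
  ext r
  simp only [Matrix.mulVec, dotProduct, Matrix.submatrix_apply, id_eq]
  rw [Finset.sum_coe_sort E (fun b => M r b * x b)]
  exact sum_subset (subset_univ E) fun b _ hb => by rw [hx b hb, mul_zero]

theorem sum_pow_char_pow_mul_intCast {R ι : Type*} [CommRing R] (p : ℕ) [Fact p.Prime]
    [CharP R p] (s : Finset ι) (γ : ι → R) (a : ι → ℤ) (l : ℕ) :
    ∑ i ∈ s, γ i ^ p ^ l * (a i : R) = (∑ i ∈ s, γ i * (a i : R)) ^ p ^ l := by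
  rw [sum_pow_char_pow]
  refine sum_congr rfl fun i _ => ?_
  rw [mul_pow]
  exact congrArg _ (map_intCast (iterateFrobenius R p l) (a i)).symm

theorem isAcyclicEdges_of_forall_fst_eq_or_snd_eq {m n : ℕ} (i₀ : Fin m) (j₀ : Fin n)
    (E : Finset (Fin m × Fin n)) (hE : ∀ e ∈ E, e.1 = i₀ ∨ e.2 = j₀) :
    IsAcyclicEdges E := by
  rintro C hC ⟨k, hk, I, J, hI, hJ, rfl⟩
  have hmem : ∀ ℓ < k, (I ℓ, J ℓ) ∈ E ∧ (I ((ℓ + 1) % k), J ℓ) ∈ E := fun ℓ hℓ =>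
    ⟨hC (mem_union_left _ (mem_image_of_mem _ (mem_range.2 hℓ))),
      hC (mem_union_right _ (mem_image_of_mem _ (mem_range.2 hℓ)))⟩
  have hstep : ∀ ℓ < k, I ℓ ≠ I ((ℓ + 1) % k) := by
    intro ℓ hℓ hIeq
    have heq := hI (Set.mem_Iio.2 hℓ) (Set.mem_Iio.2 (Nat.mod_lt _ (by omega))) hIeq
    rcases Nat.lt_or_ge (ℓ + 1) k with h | h
    · rw [Nat.mod_eq_of_lt h] at heq
      omega
    · rw [show ℓ + 1 = k by omega, Nat.mod_self] at heq
      omega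
  -- the two edges at column `J ℓ` lie in distinct rows, so not both lie in row `i₀`
  have hJ₀ : ∀ ℓ < k, J ℓ = j₀ := by
    intro ℓ hℓ
    obtain ⟨h₁, h₂⟩ := hmem ℓ hℓ
    rcases hE _ h₁, hE _ h₂ with ⟨h | h, h' | h'⟩
    · exact absurd (h.trans h'.symm) (hstep ℓ hℓ)
    all_goals assumption
  have := hJ (Set.mem_Iio.2 (by omega : 0 < k)) (Set.mem_Iio.2 (by omega : 1 < k))
    ((hJ₀ 0 (by omega)).trans (hJ₀ 1 (by omega)).symm)
  omega

section GridCode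

variable {F : Type*} [Field F] {m n h : ℕ}

theorem gridH_mulVec_eq_zero {c : Fin m × Fin n → Fin h → F} {x : Fin m × Fin n → F}
    (hrow : ∀ i, ∑ j, x (i, j) = 0) (hcol : ∀ j, ∑ i, x (i, j) = 0)
    (hglob : ∀ l, ∑ e, c e l * x e = 0) : gridH F m n h c *ᵥ x = 0 := by
  ext (i | j | l)
  · simp [gridH, mulVec, dotProduct, Fintype.sum_prod_type_right, hrow]
  · simp only [gridH, mulVec, dotProduct, Fintype.sum_prod_type_right, of_apply, Sum.elim_inr,
      Sum.elim_inl, ite_mul, one_mul, zero_mul, Pi.zero_apply]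
    refine sum_eq_zero fun b _ => ?_
    by_cases hb : (b : ℕ) = j <;> simp [hb, hcol]
  · simpa [gridH, mulVec, dotProduct] using hglob l

theorem IsMR.gridH_mulVec_ne_zero {c : Fin m × Fin n → Fin h → F} (hMR : IsMR F m n h c)
    {E' F' : Finset (Fin m × Fin n)} (hE' : IsAcyclicEdges E') (hF' : F'.card ≤ h)
    {x : Fin m × Fin n → F} (hx : ∀ e ∉ E' ∪ F', x e = 0) (hne : x ≠ 0) :
    gridH F m n h c *ᵥ x ≠ 0 := by
  intro hHx
  have hy : (fun e : ↥(E' ∪ F') => x e) ≠ 0 := fun h0 =>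
    hne <| funext fun e => if he : e ∈ E' ∪ F' then congrFun h0 ⟨e, he⟩ else hx e he
  have hlt := (gridH F m n h c).submatrix id (fun e : ↥(E' ∪ F') => (e : Fin m × Fin n))
    |>.rank_lt_card_of_mulVec_eq_zero hy (by rw [submatrix_mulVec_of_support_subset _ _ hx, hHx])
  rw [hMR _ ⟨E', F', hE', hF', rfl⟩, Fintype.card_coe] at hlt
  exact lt_irrefl _ hlt

theorem IsMR.gridH_mulVec_ne_zero_of_support_two_rows {c : Fin m × Fin n → Fin h → F}
    (hMR : IsMR F m n h c) {i₀ i₁ : Fin m} {D : Finset (Fin n)} (hD : D.card ≤ h + 1)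
    {x : Fin m × Fin n → F} (hx : ∀ e ∉ ({i₀, i₁} : Finset (Fin m)) ×ˢ D, x e = 0)
    (hne : x ≠ 0) : gridH F m n h c *ᵥ x ≠ 0 := by
  obtain ⟨e, hxe⟩ := Function.ne_iff.1 hne
  have hj₀ : e.2 ∈ D := (mem_product.1 (not_imp_comm.1 (hx e) hxe)).2
  refine hMR.gridH_mulVec_ne_zero (E' := {i₀} ×ˢ D ∪ {(i₁, e.2)}) (F' := {i₁} ×ˢ D.erase e.2)
    (isAcyclicEdges_of_forall_fst_eq_or_snd_eq i₀ e.2 _ ?_) ?_ (fun f hf => hx f ?_) hne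
  · simp only [mem_union, mem_product, mem_singleton]
    rintro f (⟨hf, -⟩ | rfl)
    exacts [Or.inl hf, Or.inr rfl]
  · rw [card_product, card_singleton, one_mul, card_erase_of_mem hj₀]
    omega
  · obtain ⟨i, j⟩ := f
    contrapose! hf
    simp only [mem_union, mem_product, mem_insert, mem_singleton, mem_erase, Prod.mk.injEq]
      at hf ⊢
    by_cases j = e.2 <;> tauto

end GridCode

section Gabidulin

variable {F : Type*} [Field F] {m n h : ℕ} (p : ℕ) [Fact p.Prime] [CharP F p]

theorem gridH_gabidulin_mulVec_intCast_outer_eq_zero (γ : Fin m × Fin n → F) (u : Fin m → ℤ)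
    (χ : Fin n → ℤ) (hu : ∑ i, u i = 0) (hχ : ∑ j, χ j = 0)
    (hγ : ∑ e, γ e * ((u e.1 * χ e.2 : ℤ) : F) = 0) :
    gridH F m n h (fun ij l => γ ij ^ p ^ (l : ℕ)) *ᵥ (fun e => ((u e.1 * χ e.2 : ℤ) : F)) = 0 :=
  gridH_mulVec_eq_zero
    (fun i => by rw [← Int.cast_sum]; dsimp only; rw [← mul_sum, hχ, mul_zero, Int.cast_zero])
    (fun j => by rw [← Int.cast_sum]; dsimp only; rw [← sum_mul, hu, zero_mul, Int.cast_zero])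
    fun l => by
      rw [sum_pow_char_pow_mul_intCast p univ γ (fun e => u e.1 * χ e.2), hγ,
        zero_pow (pow_ne_zero _ (Fact.out : p.Prime).ne_zero)]

theorem IsMR.sum_ne_sum_of_disjoint {γ : Fin m × Fin n → F}
    (hMR : IsMR F m n h fun ij l => γ ij ^ p ^ (l : ℕ)) {i₀ i₁ : Fin m} (hi : i₀ ≠ i₁)
    {A B : Finset (Fin n)} (hAB : Disjoint A B) (hcard : A.card = B.card) (hA : A.Nonempty)
    (hAh : A.card + B.card ≤ h + 1) :
    ∑ j ∈ A, (γ (i₀, j) - γ (i₁, j)) ≠ ∑ j ∈ B, (γ (i₀, j) - γ (i₁, j)) := by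
  intro hsum
  set u : Fin m → ℤ := Pi.single i₀ 1 - Pi.single i₁ 1
  set χ : Fin n → ℤ := fun j => (if j ∈ A then 1 else 0) - (if j ∈ B then 1 else 0)
  refine hMR.gridH_mulVec_ne_zero_of_support_two_rows (i₀ := i₀) (i₁ := i₁)
    ((card_union_le A B).trans hAh) (x := fun e => ((u e.1 * χ e.2 : ℤ) : F)) ?_ ?_
    (gridH_gabidulin_mulVec_intCast_outer_eq_zero p γ u χ ?_ ?_ ?_)
  · rintro ⟨i, j⟩ he
    simp only [mem_product, mem_insert, mem_singleton, mem_union, not_and_or, not_or] at he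
    rcases he with ⟨hi₀, hi₁⟩ | ⟨hjA, hjB⟩
    · simp [u, hi₀, hi₁]
    · simp [χ, hjA, hjB]
  · obtain ⟨j, hj⟩ := hA
    refine Function.ne_iff.2 ⟨(i₀, j), ?_⟩
    simp [u, χ, hi, hj, disjoint_left.1 hAB hj]
  · simp [u]
  · simp [χ, sum_sub_distrib, hcard]
  · rw [Fintype.sum_prod_type_right]
    calc ∑ j, ∑ i, γ (i, j) * ((u i * χ j : ℤ) : F)
        = ∑ j, (χ j : F) * (γ (i₀, j) - γ (i₁, j)) := sum_congr rfl fun j _ => by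
          simp only [u, Pi.sub_apply, Pi.single_apply, Int.cast_sub, Int.cast_ite,
            Int.cast_zero, sub_mul, ite_mul, one_mul, zero_mul, mul_sub, mul_ite,
            mul_zero, sum_sub_distrib, sum_ite_eq', mem_univ, if_true]
          ring
      _ = ∑ j ∈ A, (γ (i₀, j) - γ (i₁, j)) - ∑ j ∈ B, (γ (i₀, j) - γ (i₁, j)) := by
          simp [χ, sub_mul, sum_sub_distrib, ite_mul]
      _ = 0 := sub_eq_zero.2 hsum

theorem IsMR.injOn_sum_powersetCard {γ : Fin m × Fin n → F}
    (hMR : IsMR F m n h fun ij l => γ ij ^ p ^ (l : ℕ)) {i₀ i₁ : Fin m} (hi : i₀ ≠ i₁) {t : ℕ}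
    (ht : 2 * t ≤ h + 1) :
    Set.InjOn (fun S => ∑ j ∈ S, (γ (i₀, j) - γ (i₁, j)))
      (powersetCard t (univ : Finset (Fin n)) : Set (Finset (Fin n))) := by
  intro S hS S' hS' hsum
  rw [mem_coe, mem_powersetCard_univ] at hS hS'
  by_contra hne
  have hsub : ¬S ⊆ S' := fun hsub => hne (eq_of_subset_of_card_le hsub (hS.trans hS'.symm).ge)
  have hcard : (S \ S').card ≤ t := hS ▸ card_le_card sdiff_subset
  exact hMR.sum_ne_sum_of_disjoint p hi disjoint_sdiff_sdiff
    (card_sdiff_comm (hS.trans hS'.symm)) (sdiff_nonempty.2 hsub)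
    (by rw [← card_sdiff_comm (hS.trans hS'.symm)]; omega) (sum_sdiff_eq_sum_sdiff_iff.2 hsum)

end Gabidulin

theorem statement9_general (p d m n h : ℕ) (hp : p.Prime) (hm : 2 ≤ m)
    (F : Type*) [Field F] [Fintype F] (hcard : Fintype.card F = p ^ d)
    (γ : Fin m × Fin n → F)
    (hMR : IsMR F m n h (fun ij l => γ ij ^ p ^ (l : ℕ))) :
    n.choose ((h + 1) / 2) ≤ Fintype.card F := by
  have : Fact p.Prime := ⟨hp⟩
  have : CharP F p := charP_of_card_eq_prime_pow hcard
  have hinj := hMR.injOn_sum_powersetCard p (i₀ := ⟨0, by omega⟩) (i₁ := ⟨1, by omega⟩)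
    (by simp [Fin.ext_iff]) (t := (h + 1) / 2) (by omega)
  simpa using card_le_card_of_injOn _ (fun _ _ => mem_coe.2 (mem_univ _)) hinj

/-- Theorem 4.1.  Let `q = p ^ d` with `p` prime and `d ≥ h`.  If some
Gabidulin construction (with evaluation points `γ`) is an MR `(m, n, a=1, b=1, h)` grid
code over `F_q`, then `q ≥ binom(n, ⌈h/2⌉)`.  (Here `⌈h/2⌉ = (h + 1) / 2` in `ℕ`.) -/
theorem statement9 (p d m n h : ℕ) (hp : p.Prime) (hd : h ≤ d) (hh : 1 ≤ h)
    (hm : 2 ≤ m) (hn : 2 ≤ n)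
    (F : Type*) [Field F] [Fintype F] (hcard : Fintype.card F = p ^ d)
    (γ : Fin m × Fin n → F)
    (hMR : IsMR F m n h (fun ij l => γ ij ^ p ^ (l : ℕ))) :
    n.choose ((h + 1) / 2) ≤ Fintype.card F :=
  statement9_general p d m n h hp hm F hcard γ hMR
end

section
/- Let m ≥ 2 and n ≥ 2. If there exists an MR (m, n, a=1, b=1, h=1) grid code over a finite field F_q, then q ≥ n. -/
open Finset

/-!
Two rows `i ≠ i'` and two columns `j ≠ j'` span a 4-cycle, which is a path of three edges plus
one edge, hence a correctable pattern of an MR code with `h ≥ 1`. The alternating sum of its four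
columns kills all row and column checks, and kills the global checks exactly when
`c^{i,j} - c^{i',j} = c^{i,j'} - c^{i',j'}`. So `j ↦ c^{i,j} - c^{i',j}` is injective into `F^h`,
whence `n ≤ q^h`.
-/

open Matrix

lemma IsSimpleCycle.four_le_card {m n : ℕ} {C : Finset (Fin m × Fin n)}
    (hC : IsSimpleCycle C) : 4 ≤ C.card := by
  obtain ⟨k, hk, I, J, hI, hJ, rfl⟩ := hC
  have hJ' : Set.InjOn J (range k : Set ℕ) := by simpa [Set.Iio_def] using hJ
  have hsucc_ne : ∀ ℓ < k, (ℓ + 1) % k ≠ ℓ := by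
    intro ℓ hℓ
    rcases (show ℓ + 1 ≤ k by omega).lt_or_eq with h | h
    · rw [Nat.mod_eq_of_lt h]; omega
    · rw [h, Nat.mod_self]; omega
  have hdisj : Disjoint ((range k).image fun ℓ => (I ℓ, J ℓ))
      ((range k).image fun ℓ => (I ((ℓ + 1) % k), J ℓ)) := by
    simp only [disjoint_left, mem_image, mem_range, not_exists, not_and]
    rintro _ ⟨a, ha, rfl⟩ b hb hab
    obtain ⟨hIab, hJab⟩ := Prod.ext_iff.mp hab
    obtain rfl : b = a := hJ hb ha hJab
    exact hsucc_ne b hb (hI (Nat.mod_lt _ (by omega)) hb hIab)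
  rw [card_union_of_disjoint hdisj, card_image_of_injOn, card_image_of_injOn, card_range]
  · omega
  all_goals
    intro a ha b hb hab
    exact hJ' ha hb (congrArg Prod.snd hab)

lemma isAcyclicEdges_of_card_lt_four {m n : ℕ} {E : Finset (Fin m × Fin n)}
    (hE : E.card < 4) : IsAcyclicEdges E :=
  fun _ hCE hC => (hC.four_le_card.trans (card_le_card hCE)).not_gt hE

theorem Matrix.rank_lt_card_width_of_mulVec_eq_zero {ι κ K : Type*} [Field K] [Fintype κ]
    {A : Matrix ι κ K} {v : κ → K} (hv : v ≠ 0) (hAv : A *ᵥ v = 0) :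
    A.rank < Fintype.card κ := by
  have hker : 0 < Module.finrank K (LinearMap.ker A.mulVecLin) :=
    Module.finrank_pos_iff_exists_ne_zero.mpr ⟨⟨v, hAv⟩, fun h => hv congr($h.1)⟩
  have := LinearMap.finrank_range_add_finrank_ker A.mulVecLin
  rw [Module.finrank_fintype_fun_eq_card] at this
  unfold Matrix.rank
  omega

theorem Matrix.rank_submatrix_lt_card_of_mulVec_eq_zero {ι κ K : Type*} [Field K] [Fintype κ]
    {A : Matrix ι κ K} {s : Finset κ} {v : κ → K} (hv : v ≠ 0) (hvs : ∀ x ∉ s, v x = 0)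
    (hAv : A *ᵥ v = 0) : (A.submatrix id ((↑) : s → κ)).rank < s.card := by
  obtain ⟨x, hx⟩ := Function.ne_iff.mp hv
  have hxs : x ∈ s := by_contra fun h => hx (hvs x h)
  have hAv' : A.submatrix id ((↑) : s → κ) *ᵥ (fun y => v y) = 0 := by
    ext r
    rw [← congrFun hAv r]
    simp only [mulVec, dotProduct, submatrix_apply, id_eq]
    rw [sum_coe_sort s (fun y => A r y * v y)]
    exact sum_subset (subset_univ s) fun y _ hy => by rw [hvs y hy, mul_zero]
  simpa using rank_lt_card_width_of_mulVec_eq_zero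
    (Function.ne_iff.mpr ⟨⟨x, hxs⟩, hx⟩) hAv'

theorem gridH_mulVec_four_cycle {F : Type*} [Field F] {m n h : ℕ} (c : Fin m × Fin n → Fin h → F)
    (i i' : Fin m) (j j' : Fin n) (hc : c (i, j) - c (i', j) = c (i, j') - c (i', j')) :
    gridH F m n h c *ᵥ (Pi.single (i, j) 1 - Pi.single (i', j) 1 - Pi.single (i, j') 1 +
      Pi.single (i', j') 1) = 0 := by
  ext (r | r | r) <;>
    simp only [mulVec_add, mulVec_sub, mulVec_single_one, Pi.add_apply, Pi.sub_apply,
      Pi.zero_apply, col_apply, gridH, of_apply, Sum.elim_inl, Sum.elim_inr]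
  · ring
  · ring
  · have hcr := congrFun hc r
    rw [Pi.sub_apply, Pi.sub_apply] at hcr
    linear_combination hcr

theorem IsMR.injective_sub {F : Type*} [Field F] {m n h : ℕ} {c : Fin m × Fin n → Fin h → F}
    (hMR : IsMR F m n h c) (hh : 1 ≤ h) {i i' : Fin m} (hii' : i ≠ i') :
    Function.Injective fun j => c (i, j) - c (i', j) := by
  intro j j' hc
  by_contra hjj'
  let E : Finset (Fin m × Fin n) := {(i, j), (i', j), (i, j')} ∪ {(i', j')}
  have hrank := hMR E ⟨_, _, isAcyclicEdges_of_card_lt_four (card_le_three.trans_lt (by norm_num)),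
    (card_singleton _).trans_le hh, rfl⟩
  refine (rank_submatrix_lt_card_of_mulVec_eq_zero ?_ ?_
    (gridH_mulVec_four_cycle c i i' j j' hc)).ne hrank
  · exact Function.ne_iff.mpr ⟨(i, j), by simp [hii', hjj']⟩
  · intro x hx
    simp_all [E]

theorem IsMR.le_card_pow {F : Type*} [Field F] [Fintype F] {m n h : ℕ}
    {c : Fin m × Fin n → Fin h → F} (hMR : IsMR F m n h c) (hm : 2 ≤ m) (hh : 1 ≤ h) :
    n ≤ Fintype.card F ^ h := by
  have hinj := hMR.injective_sub hh (i := ⟨0, by omega⟩) (i' := ⟨1, by omega⟩) (by simp)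
  simpa using Fintype.card_le_of_injective _ hinj

theorem statement10_general (m n : ℕ) (hm : 2 ≤ m)
    (F : Type*) [Field F] [Fintype F]
    (hex : ∃ c : Fin m × Fin n → Fin 1 → F, IsMR F m n 1 c) :
    n ≤ Fintype.card F := by
  obtain ⟨c, hc⟩ := hex
  simpa using hc.le_card_pow hm le_rfl

/-- Corollary 4.2.  If `m ≥ 2`, `n ≥ 2` and an MR
`(m, n, a=1, b=1, h=1)` grid code exists over a finite field `F_q`, then `q ≥ n`. -/
theorem statement10 (m n : ℕ) (hm : 2 ≤ m) (hn : 2 ≤ n)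
    (F : Type*) [Field F] [Fintype F]
    (hex : ∃ c : Fin m × Fin n → Fin 1 → F, IsMR F m n 1 c) :
    n ≤ Fintype.card F :=
  statement10_general m n hm F hex
end
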